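/- Vacuum integration by parts: for k ∈ 𝔥_ℂ ⊗ ℂ² and any O ∈ Dom D_k, the vacuum expectation E(X) = ⟨Ω, XΩ⟩ satisfies E(D_k O) = (1/2)E({P(k₁)+Q(k₂), O}), where {X,Y} = XY+YX is the anticommutator (interpreted weakly via the vacuum vector). -/
import Mathlib


open scoped ComplexInnerProductSpace

/-- The vector `Q(k)ℰ(f) = (a(k̄)+a⁺(k))ℰ(f) = ⟪k̄,f⟫ ℰ(f) + a⁺(k)ℰ(f)`. -/
noncomputable def Qvec {H K : Type*} [NormedAddCommGroup H] [InnerProductSpace ℂ H]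
    [NormedAddCommGroup K] [InnerProductSpace ℂ K]
    (E : H → K) (ap : H → K → K) (c : H → H) (k f : H) : K :=
  ⟪c k, f⟫ • E f + ap k (E f)

/-- The vector `P(k)ℰ(f) = i(a(k̄)−a⁺(k))ℰ(f) = i(⟪k̄,f⟫ ℰ(f) − a⁺(k)ℰ(f))`. -/
noncomputable def Pvec {H K : Type*} [NormedAddCommGroup H] [InnerProductSpace ℂ H]
    [NormedAddCommGroup K] [InnerProductSpace ℂ K]
    (E : H → K) (ap : H → K → K) (c : H → H) (k f : H) : K :=
  Complex.I • (⟪c k, f⟫ • E f - ap k (E f))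

/-- `B ∈ Dom D_k` with `D_k B = M`, expressed weakly between exponential
vectors. -/
def DomRel {H K : Type*} [NormedAddCommGroup H] [InnerProductSpace ℂ H]
    [NormedAddCommGroup K] [InnerProductSpace ℂ K]
    (E : H → K) (ap : H → K → K) (c : H → H) (k₁ k₂ : H)
    (B M : K →L[ℂ] K) : Prop :=
  ∀ f g : H,
    ⟪E f, M (E g)⟫ =
      Complex.I / 2 *
        (⟪Qvec E ap c (c k₁) f - Pvec E ap c (c k₂) f, B (E g)⟫
          - ⟪E f, B (Qvec E ap c k₁ g - Pvec E ap c k₂ g)⟫)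

/-- **Vacuum integration by parts.**
For `k = (k₁,k₂) ∈ 𝔥_ℂ ⊗ ℂ²` and every `O ∈ Dom D_k` (with `D_k O = M`), the
vacuum expectation `E(X) = ⟪Ω, XΩ⟫`, `Ω = ℰ(0)`, satisfies
`E(D_k O) = ½ E({P(k₁)+Q(k₂), O})`, where the anticommutator is interpreted
weakly:
`½(⟪(P(k̄₁)+Q(k̄₂))Ω, OΩ⟫ + ⟪Ω, O(P(k₁)+Q(k₂))Ω⟫)`. -/
theorem vacuum_integration_by_parts
    {H K : Type*} [NormedAddCommGroup H] [InnerProductSpace ℂ H]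
    [NormedAddCommGroup K] [InnerProductSpace ℂ K]
    (E : H → K) (ap : H → K → K) (c : H → H) (k₁ k₂ : H)
    (O M : K →L[ℂ] K)
    (hOM : DomRel E ap c k₁ k₂ O M) :
    ⟪E 0, M (E 0)⟫ =
      1 / 2 * (⟪Pvec E ap c (c k₁) 0 + Qvec E ap c (c k₂) 0, O (E 0)⟫
        + ⟪E 0, O (Pvec E ap c k₁ 0 + Qvec E ap c k₂ 0)⟫) := by
  have h := hOM 0 0
  simp only [Qvec, Pvec, inner_zero_right, zero_smul, zero_add, zero_sub,
    smul_neg, map_add, map_neg, map_smul, inner_add_left, inner_add_right,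
    inner_neg_left, inner_neg_right, inner_smul_left, inner_smul_right,
    Complex.conj_I, sub_neg_eq_add] at h ⊢
  rw [h]; ring_nf; rw [Complex.I_sq]; ring
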